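/- arXiv:1303.3454 — 4 statements merged into one kernel-verified Lean document; each statement's English description precedes it below -/
import Mathlib

section
/- Let g be the function defined on real numbers by g(x) = vol(conv(K ∪ (K' + x·t))), where K and K' are convex bodies in ℝⁿ and t is a fixed vector. Then g is a convex function. -/
/-!
Write `E = p ⊕ ℝ t` and lift `K` to height `0`, `K'` to height `1` in `p × ℝ × ℝ`, the second
`ℝ` recording the height; let `D` be the (closed) convex hull of the two lifts. The shear
`(u, h, s) ↦ (u, h + x s)`, followed by `(u, r) ↦ u + r t`, maps `D` onto the closure of
`conv (K ∪ (K' + x t))`. Over each `u ∈ p`, the fibre of the sheared body is the image of the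
fixed compact convex slice `S_u ⊆ ℝ × ℝ` of `D` under `(h, s) ↦ h + x s`: an interval of length
`max_{S_u} (h + x s) - min_{S_u} (h + x s)`, a convex function of `x`. By Fubini the volume is
an integral of such functions, hence convex.
-/

open MeasureTheory Set
open scoped NNReal ENNReal

theorem ConvexOn.ennreal_ofReal {E : Type*} [AddCommMonoid E] [Module ℝ E] {s : Set E}
    {f : E → ℝ} (hf : ConvexOn ℝ s f) : ConvexOn ℝ≥0 s fun x => ENNReal.ofReal (f x) := by
  refine ⟨hf.1.lift ℝ≥0, fun x hx y hy a b _ _ hab => ?_⟩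
  calc ENNReal.ofReal (f (a • x + b • y))
      ≤ ENNReal.ofReal ((a : ℝ) * f x + b * f y) :=
        ENNReal.ofReal_le_ofReal (hf.2 hx hy a.2 b.2 (by exact_mod_cast hab))
    _ ≤ a • ENNReal.ofReal (f x) + b • ENNReal.ofReal (f y) := by
        rw [ENNReal.smul_def, ENNReal.smul_def, smul_eq_mul, smul_eq_mul,
          ← ENNReal.ofReal_coe_nnreal, ← ENNReal.ofReal_coe_nnreal,
          ← ENNReal.ofReal_mul a.coe_nonneg, ← ENNReal.ofReal_mul b.coe_nonneg]
        exact ENNReal.ofReal_add_le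

theorem ConvexOn.ennreal_toReal {E : Type*} [AddCommMonoid E] [Module ℝ E] {s : Set E}
    {f : E → ℝ≥0∞} (hf : ConvexOn ℝ≥0 s f) (hfin : ∀ x ∈ s, f x ≠ ∞) :
    ConvexOn ℝ s fun x => (f x).toReal := by
  refine ⟨fun x hx y hy a b ha hb hab => ?_, fun x hx y hy a b ha hb hab => ?_⟩ <;>
    lift a to ℝ≥0 using ha <;> lift b to ℝ≥0 using hb <;>
    replace hab : a + b = 1 := by exact_mod_cast hab
  · exact hf.1 hx hy a.2 b.2 hab
  calc (f ((a : ℝ) • x + (b : ℝ) • y)).toReal ≤ (a • f x + b • f y).toReal :=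
        ENNReal.toReal_mono (by simp [ENNReal.smul_def, hfin x hx, hfin y hy, ENNReal.mul_eq_top])
          (hf.2 hx hy a.2 b.2 hab)
    _ = (a : ℝ) • (f x).toReal + (b : ℝ) • (f y).toReal := by
        simp [ENNReal.smul_def, ENNReal.toReal_add, hfin x hx, hfin y hy, ENNReal.mul_eq_top]

theorem ConvexOn.lintegral {α E : Type*} [MeasurableSpace α] {ν : Measure α} [AddCommMonoid E]
    [SMul ℝ≥0 E] {s : Set E} {f : E → α → ℝ≥0∞} (hs : Convex ℝ≥0 s)
    (hf : ∀ x ∈ s, Measurable (f x)) (hconv : ∀ a, ConvexOn ℝ≥0 s (f · a)) :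
    ConvexOn ℝ≥0 s fun x => ∫⁻ a, f x a ∂ν := by
  refine ⟨hs, fun x hx y hy a b ha hb hab => ?_⟩
  calc ∫⁻ u, f (a • x + b • y) u ∂ν ≤ ∫⁻ u, a • f x u + b • f y u ∂ν :=
        lintegral_mono fun u => (hconv u).2 hx hy ha hb hab
    _ = a • ∫⁻ u, f x u ∂ν + b • ∫⁻ u, f y u ∂ν := by
        simp only [ENNReal.smul_def, smul_eq_mul]
        rw [lintegral_add_left ((hf x hx).const_mul _), lintegral_const_mul _ (hf x hx),
          lintegral_const_mul _ (hf y hy)]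

theorem Real.volume_eq_ofReal_csSup_sub_csInf {s : Set ℝ} (hs : Convex ℝ s)
    (hb : Bornology.IsBounded s) : volume s = ENNReal.ofReal (sSup s - sInf s) := by
  rcases s.eq_empty_or_nonempty with rfl | hne
  · simp
  refine le_antisymm ?_ ?_
  · rw [← Real.volume_Icc]
    exact measure_mono (subset_Icc_csInf_csSup hb.bddBelow hb.bddAbove)
  · rw [← Real.volume_Ioo]
    exact measure_mono ((hs.isConnected hne).Ioo_csInf_csSup_subset hb.bddBelow hb.bddAbove)

theorem convexOn_sSup_image_fst_add_mul_snd {S : Set (ℝ × ℝ)} (hS : IsCompact S)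
    (hne : S.Nonempty) :
    ConvexOn ℝ univ fun z : ℝ => sSup ((fun q : ℝ × ℝ => q.1 + z * q.2) '' S) := by
  refine ⟨convex_univ, fun x _ y _ a b ha hb hab => csSup_le (hne.image _) ?_⟩
  rintro _ ⟨q, hq, rfl⟩
  have hbdd : ∀ z : ℝ, BddAbove ((fun q : ℝ × ℝ => q.1 + z * q.2) '' S) := fun z =>
    (hS.image (by fun_prop)).bddAbove
  calc q.1 + (a • x + b • y) * q.2 = a * (q.1 + x * q.2) + b * (q.1 + y * q.2) := by
        simp only [smul_eq_mul]; linear_combination (-q.1) * hab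
    _ ≤ a * sSup ((fun q : ℝ × ℝ => q.1 + x * q.2) '' S)
        + b * sSup ((fun q : ℝ × ℝ => q.1 + y * q.2) '' S) := by
        gcongr
        · exact le_csSup (hbdd x) ⟨q, hq, rfl⟩
        · exact le_csSup (hbdd y) ⟨q, hq, rfl⟩

theorem sInf_image_fst_add_mul_snd_eq_neg_sSup (S : Set (ℝ × ℝ)) (z : ℝ) :
    sInf ((fun q : ℝ × ℝ => q.1 + z * q.2) '' S)
      = -sSup ((fun q : ℝ × ℝ => q.1 + z * q.2) '' (-S)) := by
  rw [Real.sInf_def, ← image_neg_eq_neg, ← image_neg_eq_neg, ← image_comp, ← image_comp]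
  congr 3
  funext q
  simp only [Function.comp_apply, Prod.fst_neg, Prod.snd_neg]
  ring

theorem convexOn_volume_image_fst_add_mul_snd {S : Set (ℝ × ℝ)} (hS : IsCompact S)
    (hconv : Convex ℝ S) :
    ConvexOn ℝ≥0 univ fun z : ℝ => volume ((fun q : ℝ × ℝ => q.1 + z * q.2) '' S) := by
  rcases S.eq_empty_or_nonempty with rfl | hne
  · simpa using convexOn_const (0 : ℝ≥0∞) (convex_univ (𝕜 := ℝ≥0) (E := ℝ))
  have hwidth : ∀ z : ℝ, volume ((fun q : ℝ × ℝ => q.1 + z * q.2) '' S)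
      = ENNReal.ofReal (sSup ((fun q : ℝ × ℝ => q.1 + z * q.2) '' S)
          + sSup ((fun q : ℝ × ℝ => q.1 + z * q.2) '' (-S))) := fun z => by
    rw [Real.volume_eq_ofReal_csSup_sub_csInf, sInf_image_fst_add_mul_snd_eq_neg_sSup,
      sub_neg_eq_add]
    · exact hconv.is_linear_image ⟨fun p q => by simp only [Prod.fst_add, Prod.snd_add]; ring,
        fun c p => by simp only [Prod.smul_fst, Prod.smul_snd, smul_eq_mul]; ring⟩
    · exact (hS.image (by fun_prop)).isBounded
  simp_rw [hwidth]
  exact ((convexOn_sSup_image_fst_add_mul_snd hS hne).add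
    (convexOn_sSup_image_fst_add_mul_snd hS.neg hne.neg)).ennreal_ofReal

theorem Convex.preimage_prodMk {𝕜 E G : Type*} [Semiring 𝕜] [PartialOrder 𝕜] [AddCommMonoid E]
    [AddCommMonoid G] [Module 𝕜 E] [Module 𝕜 G] {D : Set (E × G)} (hD : Convex 𝕜 D) (u : E) :
    Convex 𝕜 (Prod.mk u ⁻¹' D) := fun q₁ h₁ q₂ h₂ a b ha hb hab => by
  simpa [Convex.combo_self hab] using hD h₁ h₂ ha hb hab

theorem IsCompact.preimage_prodMk {X Y : Type*} [TopologicalSpace X] [TopologicalSpace Y]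
    [T2Space X] [T2Space Y] {D : Set (X × Y)} (hD : IsCompact D) (u : X) :
    IsCompact (Prod.mk u ⁻¹' D) :=
  (hD.image continuous_snd).of_isClosed_subset (hD.isClosed.preimage (by fun_prop))
    fun q hq => ⟨(u, q), hq, rfl⟩

def shear (F : Type*) [AddCommGroup F] [Module ℝ F] (x : ℝ) : F × ℝ × ℝ →ₗ[ℝ] F × ℝ :=
  LinearMap.prodMap LinearMap.id (LinearMap.fst ℝ ℝ ℝ + x • LinearMap.snd ℝ ℝ ℝ)

section Shear

variable {F : Type*} [AddCommGroup F] [Module ℝ F]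

@[simp]
theorem shear_apply (x : ℝ) (p : F × ℝ × ℝ) : shear F x p = (p.1, p.2.1 + x * p.2.2) := rfl

theorem preimage_prodMk_shear_image (x : ℝ) (D : Set (F × ℝ × ℝ)) (u : F) :
    Prod.mk u ⁻¹' (shear F x '' D) = (fun q : ℝ × ℝ => q.1 + x * q.2) '' (Prod.mk u ⁻¹' D) := by
  ext r
  constructor
  · rintro ⟨⟨v, q⟩, hq, hvq⟩
    obtain ⟨rfl, rfl⟩ := Prod.mk.inj hvq
    exact ⟨q, hq, rfl⟩
  · rintro ⟨q, hq, rfl⟩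
    exact ⟨(u, q), hq, rfl⟩

variable [TopologicalSpace F]

theorem continuous_shear (x : ℝ) : Continuous (shear F x) := by
  show Continuous fun p : F × ℝ × ℝ => (p.1, p.2.1 + x * p.2.2)
  fun_prop

variable [T2Space F] [MeasurableSpace F] [OpensMeasurableSpace F]

theorem convexOn_measure_prod_shear_image (ν : Measure F) {D : Set (F × ℝ × ℝ)}
    (hD : IsCompact D) (hDc : Convex ℝ D) :
    ConvexOn ℝ≥0 univ fun x => ν.prod volume (shear F x '' D) := by
  have hmeas : ∀ x, MeasurableSet (shear F x '' D) := fun x =>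
    (hD.image (continuous_shear x)).isClosed.measurableSet
  simp_rw [Measure.prod_apply (hmeas _), preimage_prodMk_shear_image]
  refine ConvexOn.lintegral convex_univ (fun x _ => ?_)
    fun u => convexOn_volume_image_fst_add_mul_snd (hD.preimage_prodMk u) (hDc.preimage_prodMk u)
  simpa only [preimage_prodMk_shear_image] using measurable_measure_prodMk_left (hmeas x)

end Shear

section Haar

variable {E : Type*} [NormedAddCommGroup E] [NormedSpace ℝ E] [FiniteDimensional ℝ E]
  [MeasurableSpace E] [BorelSpace E]

theorem exists_continuousLinearEquiv_prod_map_eq (μ : Measure E) [μ.IsAddHaarMeasure] {t : E}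
    (ht : t ≠ 0) : ∃ (p : Submodule ℝ E) (Φ : (p × ℝ) ≃L[ℝ] E) (ν : Measure p),
      (∀ u r, Φ (u, r) = u + r • t) ∧ (ν.prod volume).map Φ = μ := by
  obtain ⟨p, hp⟩ := (ℝ ∙ t).exists_isCompl
  let Φ : (p × ℝ) ≃L[ℝ] E := (((LinearEquiv.refl ℝ p).prodCongr
    (LinearEquiv.toSpanNonzeroSingleton ℝ E t ht)).trans
      (Submodule.prodEquivOfIsCompl p _ hp.symm)).toContinuousLinearEquiv
  set ρ := (Measure.addHaar : Measure p).prod (volume : Measure ℝ)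
  set c := Measure.addHaarScalarFactor (μ.map Φ.symm) ρ
  have hμ : μ.map Φ.symm = c • ρ := Measure.isAddLeftInvariant_eq_smul _ _
  refine ⟨p, Φ, c • Measure.addHaar, fun u r => by simp [Φ], ?_⟩
  rw [Measure.prod_smul_left, ← hμ,
    Measure.map_map Φ.continuous.measurable Φ.symm.continuous.measurable]
  simp

theorem Convex.addHaar_closure (μ : Measure E) [μ.IsAddHaarMeasure] {s : Set E}
    (hs : Convex ℝ s) : μ (closure s) = μ s := by
  rw [closure_eq_self_union_frontier]
  exact measure_congr (union_ae_eq_left_of_ae_eq_empty (ae_eq_empty.mpr (hs.addHaar_frontier μ)))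

theorem convexOn_addHaar_convexHull_union_image_add_smul (μ : Measure E) [μ.IsAddHaarMeasure]
    {K K' : Set E} (hK : IsCompact K) (hK' : IsCompact K') (t : E) :
    ConvexOn ℝ≥0 univ fun x : ℝ => μ (convexHull ℝ (K ∪ (fun k => k + x • t) '' K')) := by
  rcases eq_or_ne t 0 with rfl | ht
  · simpa using convexOn_const _ (convex_univ (𝕜 := ℝ≥0) (E := ℝ))
  obtain ⟨p, Φ, ν, hΦ, hμ⟩ := exists_continuousLinearEquiv_prod_map_eq μ ht
  let atHeight (s : ℝ) (k : E) : p × ℝ × ℝ := ((Φ.symm k).1, (Φ.symm k).2, s)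
  have hatHeight : ∀ x s k, Φ (shear p x (atHeight s k)) = k + (x * s) • t := fun x s k => by
    rw [shear_apply, hΦ, add_smul, ← add_assoc, ← hΦ, Prod.mk.eta, Φ.apply_symm_apply]
  have hatHeight_cont : ∀ s, Continuous (atHeight s) := fun s => by fun_prop
  -- Closing the hull makes `D` compact without changing volumes (`Convex.addHaar_closure`).
  set D := closure (convexHull ℝ (atHeight 0 '' K ∪ atHeight 1 '' K'))
  have hD : IsCompact D := (isBounded_convexHull.mpr ((hK.image (hatHeight_cont 0)).union
    (hK'.image (hatHeight_cont 1))).isBounded).isCompact_closure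
  have hΦD : ∀ x : ℝ, Φ '' (shear p x '' D)
      = closure (convexHull ℝ (K ∪ (fun k => k + x • t) '' K')) := fun x => by
    let L := (Φ : (p × ℝ) →ₗ[ℝ] E) ∘ₗ shear p x
    have hL : ∀ y, L y = Φ (shear p x y) := fun _ => rfl
    calc Φ '' (shear p x '' D) = L '' D := image_image ..
      _ = closure (convexHull ℝ (L '' (atHeight 0 '' K ∪ atHeight 1 '' K'))) := by
        rw [image_closure_of_isCompact hD L.continuous_of_finiteDimensional.continuousOn,
          L.image_convexHull]
      _ = _ := by
        simp only [image_union, image_image, hL, hatHeight, mul_zero, zero_smul, add_zero,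
          image_id', mul_one]
  have hvol : ∀ x : ℝ, μ (convexHull ℝ (K ∪ (fun k => k + x • t) '' K'))
      = ν.prod volume (shear p x '' D) := fun x => by
    rw [← (convex_convexHull ℝ _).addHaar_closure μ, ← hΦD, ← hμ,
      Measure.map_apply Φ.continuous.measurable, preimage_image_eq _ Φ.injective]
    exact ((hD.image (continuous_shear x)).image Φ.continuous).isClosed.measurableSet
  simp_rw [hvol]
  exact convexOn_measure_prod_shear_image ν hD (convex_convexHull ℝ _).closure

end Haar

theorem volume_convexHull_translate_convexOn_general {n : ℕ}
    (K K' : Set (EuclideanSpace ℝ (Fin n)))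
    (hKcpt : IsCompact K) (hK'cpt : IsCompact K')
    (t : EuclideanSpace ℝ (Fin n)) :
    ConvexOn ℝ Set.univ (fun x : ℝ =>
      (volume (convexHull ℝ (K ∪ (fun p => p + x • t) '' K'))).toReal) :=
  (convexOn_addHaar_convexHull_union_image_add_smul volume hKcpt hK'cpt t).ennreal_toReal
    fun x _ => (isBounded_convexHull.mpr
      (hKcpt.isBounded.union (hK'cpt.image (by fun_prop)).isBounded)).measure_lt_top.ne

/-- For convex bodies `K`, `K'` in `ℝⁿ` and a fixed vector `t`, the function
`g(x) = vol(conv(K ∪ (K' + x • t)))` is convex. -/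
theorem volume_convexHull_translate_convexOn {n : ℕ}
    (K K' : Set (EuclideanSpace ℝ (Fin n)))
    (hKcpt : IsCompact K) (hK'cpt : IsCompact K')
    (hKconv : Convex ℝ K) (hK'conv : Convex ℝ K')
    (hKint : (interior K).Nonempty) (hK'int : (interior K').Nonempty)
    (t : EuclideanSpace ℝ (Fin n)) :
    ConvexOn ℝ Set.univ (fun x : ℝ =>
      (volume (convexHull ℝ (K ∪ (fun p => p + x • t) '' K'))).toReal) :=
  volume_convexHull_translate_convexOn_general K K' hKcpt hK'cpt t
end

section
/- Let s₁, …, sₙ be linearly independent vectors in ℝⁿ with Gram matrix G, let M = [s₁ ⋯ sₙ], let s = s₁ + ⋯ + sₙ, and suppose u₀ is the unit vector satisfying ⟨u₀, s₁⟩ = ⋯ = ⟨u₀, sₙ⟩ > 0. Then ⟨u₀, s⟩ = n / √‖(1,…,1)·G⁻¹‖₁, where ‖·‖₁ denotes the ℓ¹-norm; moreover all entries of (1,…,1)·G⁻¹ are then nonnegative up to the normalization used, and u₀ = M·α with α = (1/√‖(1,…,1)G⁻¹‖₁)·G⁻¹(1,…,1)ᵀ. -/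
open scoped RealInnerProductSpace

/-!
Write `u₀ = ∑ αᵢ sᵢ`. The conditions `⟪u₀, sⱼ⟫ = c` say `α G = c (1,…,1)`, so `α = c β` since the
Gram matrix of a linearly independent family is invertible. Then
`1 = ‖u₀‖² = ∑ αᵢ ⟪sᵢ, u₀⟫ = c² ∑ βᵢ`, and `β ≥ 0` turns `∑ βᵢ` into `‖β‖₁`, so `√‖β‖₁ = c⁻¹`.
-/

namespace Matrix

variable {ι E : Type*} [Fintype ι] [NormedAddCommGroup E] [InnerProductSpace ℝ E]

theorem vecMul_gram (v : ι → E) (α : ι → ℝ) :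
    vecMul α (gram ℝ v) = fun j => ⟪∑ i, α i • v i, v j⟫ := by
  ext j
  simp only [vecMul, dotProduct, gram_apply, sum_inner, real_inner_smul_left]

theorem eq_smul_vecMul_inv_gram_of_inner_eq [DecidableEq ι] {v : ι → E}
    (hv : LinearIndependent ℝ v) {α : ι → ℝ} {c : ℝ}
    (hc : ∀ j, ⟪∑ i, α i • v i, v j⟫ = c) :
    α = c • vecMul (fun _ => 1) (gram ℝ v)⁻¹ := by
  have hdet : IsUnit (gram ℝ v).det :=
    (det_gram_ne_zero_iff_linearIndependent.mpr hv).isUnit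
  have hαG : vecMul α (gram ℝ v) = c • fun _ => 1 := by
    ext j
    simp [vecMul_gram, hc]
  calc α = vecMul (vecMul α (gram ℝ v)) (gram ℝ v)⁻¹ := by
        rw [vecMul_vecMul, mul_nonsing_inv _ hdet, vecMul_one]
    _ = c • vecMul (fun _ => 1) (gram ℝ v)⁻¹ := by rw [hαG, smul_vecMul]

end Matrix

theorem norm_sum_smul_sq_of_inner_eq {ι E : Type*} [Fintype ι] [NormedAddCommGroup E]
    [InnerProductSpace ℝ E] {v : ι → E} {α : ι → ℝ} {c : ℝ}
    (hc : ∀ j, ⟪∑ i, α i • v i, v j⟫ = c) :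
    ‖∑ i, α i • v i‖ ^ 2 = c * ∑ i, α i := by
  rw [← real_inner_self_eq_norm_sq, inner_sum, Finset.mul_sum]
  simp only [real_inner_smul_right, hc, mul_comm]

/-- For a basis `s 1, …, s n` of `ℝⁿ` with Gram matrix `G`, and `u₀` the unit
vector with equal positive inner products with all `s i` (assuming `β = (1,…,1)G⁻¹` has
nonnegative entries), one has `⟨u₀, s⟩ = n/√‖β‖₁` and `u₀ = M·α` with
`α = (1/√‖β‖₁)·G⁻¹(1,…,1)ᵀ`. -/
theorem equal_inner_normal_formula {n : ℕ}
    (s : Fin n → EuclideanSpace ℝ (Fin n)) (hli : LinearIndependent ℝ s)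
    (G : Matrix (Fin n) (Fin n) ℝ) (hG : ∀ i j, G i j = ⟪s i, s j⟫)
    (u₀ : EuclideanSpace ℝ (Fin n)) (hu₀ : ‖u₀‖ = 1)
    (c : ℝ) (hc : 0 < c) (heq : ∀ i, ⟪u₀, s i⟫ = c)
    (β : Fin n → ℝ) (hβ : β = Matrix.vecMul (fun _ => (1 : ℝ)) G⁻¹)
    (hβnonneg : ∀ i, 0 ≤ β i) :
    ⟪u₀, ∑ i, s i⟫ = (n : ℝ) / Real.sqrt (∑ i, |β i|) ∧
    u₀ = ∑ i, ((Real.sqrt (∑ j, |β j|))⁻¹ * β i) • s i := by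
  obtain ⟨α, rfl⟩ : ∃ α : Fin n → ℝ, ∑ i, α i • s i = u₀ :=
    (Submodule.mem_span_range_iff_exists_fun ℝ).mp
      (by simp [hli.span_eq_top_of_card_eq_finrank' (by simp)])
  have hα : α = c • β := by
    rw [hβ, Matrix.ext fun i j => hG i j]
    exact Matrix.eq_smul_vecMul_inv_gram_of_inner_eq hli heq
  have hβsum : ∑ i, β i = c⁻¹ ^ 2 := by
    have h := norm_sum_smul_sq_of_inner_eq heq
    rw [hu₀, hα] at h
    simp only [Pi.smul_apply, smul_eq_mul, ← Finset.mul_sum] at h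
    field_simp
    linarith
  have hsqrt : Real.sqrt (∑ i, |β i|) = c⁻¹ := by
    simp_rw [abs_of_nonneg (hβnonneg _), hβsum, Real.sqrt_sq (inv_nonneg.mpr hc.le)]
  refine ⟨?_, ?_⟩
  · simp [inner_sum, heq, hsqrt]
  · simp [hsqrt, hα]
end

section
/- Let s₁, …, sₙ ∈ ℝⁿ be unit vectors with pairwise inner products 1/2, s = Σ s_i, u₀ = s/‖s‖, and let u be a unit vector with ⟨u, s_i⟩ ≥ 0 for all i. If ⟨s − (n+1)s_j, u⟩ ≥ 0 for some j, then ⟨s_j, u⟩ ≤ √(n/(2(n+1))) · ⟨u₀, u⟩. -/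
/-!
Since `u₀ = s / ‖s‖` and `‖s‖² = n(n+1)/2`, the constant `√(n/(2(n+1)))` is exactly
`‖s‖ / (n+1)`, so the right-hand side is `⟨s, u⟩ / (n+1)`; the facet hypothesis is the
inequality `(n+1) ⟨s_j, u⟩ ≤ ⟨s, u⟩`.
-/

open scoped RealInnerProductSpace

section EquiangularSum

variable {ι E : Type*} [Fintype ι] [NormedAddCommGroup E] [InnerProductSpace ℝ E]

theorem sum_inner_eq_of_norm_eq_one_of_inner_eq {s : ι → E} {c : ℝ}
    (hnorm : ∀ i, ‖s i‖ = 1) (hinner : ∀ i k, i ≠ k → ⟪s i, s k⟫ = c) (i : ι) :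
    ∑ k, ⟪s i, s k⟫ = 1 + ((Fintype.card ι : ℝ) - 1) * c := by
  classical
  rw [← Finset.add_sum_erase _ _ (Finset.mem_univ i), real_inner_self_eq_norm_sq, hnorm,
    Finset.sum_congr rfl fun k hk => hinner i k (Finset.ne_of_mem_erase hk).symm,
    Finset.sum_const, Finset.card_erase_of_mem (Finset.mem_univ i), Finset.card_univ,
    nsmul_eq_mul, Nat.cast_pred (Fintype.card_pos_iff.mpr ⟨i⟩)]
  ring

theorem norm_sum_sq_of_norm_eq_one_of_inner_eq {s : ι → E} {c : ℝ}
    (hnorm : ∀ i, ‖s i‖ = 1) (hinner : ∀ i k, i ≠ k → ⟪s i, s k⟫ = c) :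
    ‖∑ i, s i‖ ^ 2 = Fintype.card ι * (1 + ((Fintype.card ι : ℝ) - 1) * c) := by
  rw [← real_inner_self_eq_norm_sq, sum_inner]
  simp only [inner_sum, sum_inner_eq_of_norm_eq_one_of_inner_eq hnorm hinner,
    Finset.sum_const, Finset.card_univ, nsmul_eq_mul]

end EquiangularSum

theorem norm_sum_simplex_vertices {n : ℕ} {E : Type*} [NormedAddCommGroup E]
    [InnerProductSpace ℝ E] {s : Fin n → E} (hnorm : ∀ i, ‖s i‖ = 1)
    (hinner : ∀ i j, i ≠ j → ⟪s i, s j⟫ = 1 / 2) :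
    ‖∑ i, s i‖ = √((n : ℝ) * (n + 1) / 2) := by
  have hsq := norm_sum_sq_of_norm_eq_one_of_inner_eq hnorm hinner
  rw [Fintype.card_fin] at hsq
  rw [← Real.sqrt_sq (norm_nonneg (∑ i, s i)), hsq]
  ring_nf

theorem sqrt_div_two_mul_succ (x : ℝ) (hx : 0 ≤ x) :
    √(x / (2 * (x + 1))) = √(x * (x + 1) / 2) / (x + 1) := by
  have hx1 : 0 < x + 1 := by linarith
  rw [eq_div_iff hx1.ne', ← Real.sqrt_sq hx1.le, ← Real.sqrt_mul (by positivity),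
    Real.sqrt_sq hx1.le]
  congr 1
  field_simp

theorem upper_facet_vertex_inner_bound_general {n : ℕ}
    (s : Fin n → EuclideanSpace ℝ (Fin n))
    (hnorm : ∀ i, ‖s i‖ = 1)
    (hinner : ∀ i j, i ≠ j → ⟪s i, s j⟫ = 1 / 2)
    (u : EuclideanSpace ℝ (Fin n)) (j : Fin n)
    (hupper : 0 ≤ ⟪(∑ i, s i) - ((n : ℝ) + 1) • s j, u⟫) :
    ⟪s j, u⟫ ≤ Real.sqrt ((n : ℝ) / (2 * ((n : ℝ) + 1))) *
      ⟪‖∑ i, s i‖⁻¹ • ∑ i, s i, u⟫ := by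
  have hn : (0 : ℝ) < n := Nat.cast_pos.mpr (Fin.pos j)
  have hnorm_sum := norm_sum_simplex_vertices hnorm hinner
  have hnorm_ne : ‖∑ i, s i‖ ≠ 0 := by rw [hnorm_sum]; positivity
  have hfacet : ((n : ℝ) + 1) * ⟪s j, u⟫ ≤ ⟪∑ i, s i, u⟫ := by
    rw [inner_sub_left, real_inner_smul_left] at hupper
    linarith
  calc ⟪s j, u⟫ ≤ ⟪∑ i, s i, u⟫ / ((n : ℝ) + 1) := by
        rw [le_div_iff₀ (by positivity)]
        linarith
    _ = _ := by
        rw [sqrt_div_two_mul_succ _ hn.le, ← hnorm_sum, real_inner_smul_left]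
        field_simp

/-- In the regular simplex setup (unit vectors with pairwise inner products
`1/2`, `s = ∑ s i`, `u₀ = s/‖s‖`), if `u` is a unit vector with `⟨u, s i⟩ ≥ 0` for all `i`
and `⟨s − (n+1)·s j, u⟩ ≥ 0`, then `⟨s j, u⟩ ≤ √(n/(2(n+1)))·⟨u₀, u⟩`. -/
theorem upper_facet_vertex_inner_bound {n : ℕ}
    (s : Fin n → EuclideanSpace ℝ (Fin n))
    (hnorm : ∀ i, ‖s i‖ = 1)
    (hinner : ∀ i j, i ≠ j → ⟪s i, s j⟫ = 1 / 2)
    (u : EuclideanSpace ℝ (Fin n)) (hu : ‖u‖ = 1)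
    (hnonneg : ∀ i, 0 ≤ ⟪u, s i⟫) (j : Fin n)
    (hupper : 0 ≤ ⟪(∑ i, s i) - ((n : ℝ) + 1) • s j, u⟫) :
    ⟪s j, u⟫ ≤ Real.sqrt ((n : ℝ) / (2 * ((n : ℝ) + 1))) *
      ⟪‖∑ i, s i‖⁻¹ • ∑ i, s i, u⟫ :=
  upper_facet_vertex_inner_bound_general s hnorm hinner u j hupper
end

section
/- Let n ≥ 3 and 2 ≤ k ≤ n−1, and suppose a real number c = ⟨u₀,u⟩ satisfies c·√((n+1)(k−1)/(nk)) − √(1−c²)·√((n−k+1)/(nk)) ≤ √((k−1)n/(k(n+1)))·c with 0 < c ≤ 1. Then c² ≤ (n+1)(n−k+1) / ((k−1) + (n+1)(n−k+1)). -/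
/-!
Write `t = √((k-1)/(k n (n+1)))`. The two square roots multiplying `c` in the hypothesis are
`(n+1) t` and `n t`, so the hypothesis collapses to `c t ≤ √(1-c²) √((n-k+1)/(nk))`. Both sides
are nonnegative, and squaring gives `c² (k-1) ≤ (1-c²)(n+1)(n-k+1)` after clearing denominators,
which is the claimed bound on `c²`.
-/

open Real

lemma Real.sqrt_mul_sq_eq_mul_sqrt (x : ℝ) {a : ℝ} (ha : 0 ≤ a) : √(x * a ^ 2) = a * √x := by
  rw [sqrt_mul' x (sq_nonneg a), sqrt_sq ha, mul_comm]

lemma sqrt_sub_sqrt_eq_sqrt {N K : ℝ} (hN : 0 < N) :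
    √((N + 1) * (K - 1) / (N * K)) - √((K - 1) * N / (K * (N + 1))) =
      √((K - 1) / (K * N * (N + 1))) := by
  have hA : (N + 1) * (K - 1) / (N * K) = (K - 1) / (K * N * (N + 1)) * (N + 1) ^ 2 := by
    field_simp
  have hD : (K - 1) * N / (K * (N + 1)) = (K - 1) / (K * N * (N + 1)) * N ^ 2 := by
    field_simp
  rw [hA, hD, sqrt_mul_sq_eq_mul_sqrt _ (by linarith), sqrt_mul_sq_eq_mul_sqrt _ hN.le]
  ring

lemma sq_mul_sq_le_of_mul_le_sqrt_one_sub_sq_mul {c t b : ℝ} (hc0 : 0 ≤ c) (hc1 : c ≤ 1)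
    (ht : 0 ≤ t) (h : c * t ≤ √(1 - c ^ 2) * b) : c ^ 2 * t ^ 2 ≤ (1 - c ^ 2) * b ^ 2 := by
  have hs : √(1 - c ^ 2) ^ 2 = 1 - c ^ 2 := sq_sqrt (by nlinarith)
  calc c ^ 2 * t ^ 2 = (c * t) ^ 2 := by ring
    _ ≤ (√(1 - c ^ 2) * b) ^ 2 := pow_le_pow_left₀ (mul_nonneg hc0 ht) h 2
    _ = (1 - c ^ 2) * b ^ 2 := by rw [mul_pow, hs]

lemma le_div_add_of_mul_le_one_sub_mul {x p q : ℝ} (hpq : 0 < p + q) (h : x * p ≤ (1 - x) * q) :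
    x ≤ q / (p + q) := by
  rw [le_div_iff₀ hpq]
  linarith

lemma cos_sq_le_of_reflection_constraint {N K c : ℝ} (hN : 0 < N) (hK : 1 ≤ K) (hKN : K ≤ N)
    (hc0 : 0 ≤ c) (hc1 : c ≤ 1)
    (h : c * √((N + 1) * (K - 1) / (N * K)) - √(1 - c ^ 2) * √((N - K + 1) / (N * K))
      ≤ √((K - 1) * N / (K * (N + 1))) * c) :
    c ^ 2 ≤ (N + 1) * (N - K + 1) / ((K - 1) + (N + 1) * (N - K + 1)) := by
  set p := (K - 1) / (K * N * (N + 1))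
  set q := (N - K + 1) / (N * K)
  have hp : 0 ≤ p := by positivity
  have hq : 0 < q := div_pos (by linarith) (by positivity)
  have hct : c * √p ≤ √(1 - c ^ 2) * √q := by
    rw [← sqrt_sub_sqrt_eq_sqrt hN]
    linarith
  have hsq := sq_mul_sq_le_of_mul_le_sqrt_one_sub_sq_mul hc0 hc1 (sqrt_nonneg p) hct
  rw [sq_sqrt hp, sq_sqrt hq.le] at hsq
  have hbound := le_div_add_of_mul_le_one_sub_mul (by linarith) hsq
  convert hbound using 1
  simp only [p, q]
  field_simp

theorem quadratic_bound_on_cos_general {n k : ℕ} (hk : 2 ≤ k) (hkn : k ≤ n - 1)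
    (c : ℝ) (hc0 : 0 < c) (hc1 : c ≤ 1)
    (h : c * Real.sqrt (((n : ℝ) + 1) * ((k : ℝ) - 1) / ((n : ℝ) * (k : ℝ)))
        - Real.sqrt (1 - c ^ 2) *
            Real.sqrt (((n : ℝ) - (k : ℝ) + 1) / ((n : ℝ) * (k : ℝ)))
      ≤ Real.sqrt (((k : ℝ) - 1) * (n : ℝ) / ((k : ℝ) * ((n : ℝ) + 1))) * c) :
    c ^ 2 ≤ ((n : ℝ) + 1) * ((n : ℝ) - (k : ℝ) + 1) /
      (((k : ℝ) - 1) + ((n : ℝ) + 1) * ((n : ℝ) - (k : ℝ) + 1)) := by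
  have hkn' : k + 1 ≤ n := by omega
  have hK : (1 : ℝ) ≤ k := by exact_mod_cast (by omega : 1 ≤ k)
  have hKN : (k : ℝ) + 1 ≤ n := by exact_mod_cast hkn'
  exact cos_sq_le_of_reflection_constraint (by linarith) hK (by linarith) hc0.le hc1 h

/-- For `n ≥ 3`, `2 ≤ k ≤ n−1`, and `c ∈ (0,1]` satisfying the combined
geometric constraint, one has `c² ≤ (n+1)(n−k+1)/((k−1)+(n+1)(n−k+1))`. -/
theorem quadratic_bound_on_cos {n k : ℕ} (hn : 3 ≤ n) (hk : 2 ≤ k) (hkn : k ≤ n - 1)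
    (c : ℝ) (hc0 : 0 < c) (hc1 : c ≤ 1)
    (h : c * Real.sqrt (((n : ℝ) + 1) * ((k : ℝ) - 1) / ((n : ℝ) * (k : ℝ)))
        - Real.sqrt (1 - c ^ 2) *
            Real.sqrt (((n : ℝ) - (k : ℝ) + 1) / ((n : ℝ) * (k : ℝ)))
      ≤ Real.sqrt (((k : ℝ) - 1) * (n : ℝ) / ((k : ℝ) * ((n : ℝ) + 1))) * c) :
    c ^ 2 ≤ ((n : ℝ) + 1) * ((n : ℝ) - (k : ℝ) + 1) /
      (((k : ℝ) - 1) + ((n : ℝ) + 1) * ((n : ℝ) - (k : ℝ) + 1)) :=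
  quadratic_bound_on_cos_general hk hkn c hc0 hc1 h
end
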